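/- There exists an absolute constant C > 0 such that the following holds. Let A > 0 and let U : [−1,1] → ℝ be continuous on [−1,1] and continuously differentiable on (−1,1), satisfying |U(y)| ≤ A(1−y²)(1 + |ln(1−y²)|) and |U'(y)| ≤ A(1 + |ln(1−y²)|) for all y ∈ (−1,1). Then the associated axisymmetric no-swirl velocity field u and pressure p satisfy, for all x ∈ ℝ³ with x' ≠ 0, |u(x)| ≤ C A (1 + ln(|x|/|x'|)) / |x| and |p(x)| ≤ C (A + A²) (1 + ln(|x|/|x'|)) / |x|². -/

import Mathlib

open Set

/-- The Euclidean norm of `x' = (x₁, x₂)`, the first two coordinates of `x ∈ ℝ³`. -/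
noncomputable def primeNorm3 (x : EuclideanSpace ℝ (Fin 3)) : ℝ :=
  Real.sqrt (x 0 ^ 2 + x 1 ^ 2)

/-- The axisymmetric no-swirl velocity field associated with the profile `U`:
writing `r = |x|`, `ρ = |x'|`, `y = x₃/r`,
`u₁ = x₁U'(y)/r² + x₁x₃U(y)/(rρ²)`, `u₂ = x₂U'(y)/r² + x₂x₃U(y)/(rρ²)`,
`u₃ = x₃U'(y)/r² - U(y)/r`. -/
noncomputable def velField (U : ℝ → ℝ) (x : EuclideanSpace ℝ (Fin 3)) :
    EuclideanSpace ℝ (Fin 3) :=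
  WithLp.toLp 2 fun i =>
    if i = 0 then
      x 0 * deriv U (x 2 / ‖x‖) / ‖x‖ ^ 2 + x 0 * x 2 * U (x 2 / ‖x‖) / (‖x‖ * primeNorm3 x ^ 2)
    else if i = 1 then
      x 1 * deriv U (x 2 / ‖x‖) / ‖x‖ ^ 2 + x 1 * x 2 * U (x 2 / ‖x‖) / (‖x‖ * primeNorm3 x ^ 2)
    else
      x 2 * deriv U (x 2 / ‖x‖) / ‖x‖ ^ 2 - U (x 2 / ‖x‖) / ‖x‖

/-- The pressure associated with the profile `U`:
`p = U'(y)/r² - U(y)²/(2ρ²)` with `r = |x|`, `ρ = |x'|`, `y = x₃/r`. -/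
noncomputable def pressure (U : ℝ → ℝ) (x : EuclideanSpace ℝ (Fin 3)) : ℝ :=
  deriv U (x 2 / ‖x‖) / ‖x‖ ^ 2 - (U (x 2 / ‖x‖)) ^ 2 / (2 * primeNorm3 x ^ 2)

/-
The profile is only evaluated at `y = x₃/r`, where `1 - y² = (ρ/r)²` and `|ln(1 - y²)| = 2 ln(r/ρ)`
with `r = |x|`, `ρ = |x'|`; so both hypotheses become bounds by `B = A(1 + 2 ln(r/ρ))`, namely
`|U'(y)| ≤ B` and `|U(y)| ≤ B(ρ/r)²`. The velocity splits as `U'(y) x/r² + U(y)/(rρ²) · v` with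
`|v| = ρr`, giving `|u| ≤ B/r + Bρ/r² ≤ 2B/r`. For the pressure the dangerous term `U(y)²/(2ρ²)`
is at most `(Bρ)²/(2r⁴)`, and `1 + 2 ln t ≤ 2t` for `t = r/ρ` gives `Bρ ≤ 2Ar`, removing the
logarithm from the quadratic term.
-/

open Real

lemma Real.one_add_two_mul_log_le {t : ℝ} (ht : 0 < t) : 1 + 2 * log t ≤ 2 * t := by
  linarith [log_le_sub_one_of_pos ht]

lemma one_sub_div_sq_eq {ρ r z : ℝ} (hr : r ≠ 0) (h : ρ ^ 2 + z ^ 2 = r ^ 2) :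
    1 - (z / r) ^ 2 = (ρ / r) ^ 2 := by
  field_simp
  linarith

lemma abs_log_div_sq {ρ r : ℝ} (hρ : 0 < ρ) (hρr : ρ ≤ r) :
    |log ((ρ / r) ^ 2)| = 2 * log (r / ρ) := by
  have hL : 0 ≤ log (r / ρ) := log_nonneg ((one_le_div hρ).mpr hρr)
  rw [log_pow, ← inv_div, log_inv, abs_of_nonpos (by linarith)]
  push_cast
  ring

lemma profile_bounds_at {A ρ r z : ℝ} {U : ℝ → ℝ} (hρ : 0 < ρ) (hρr : ρ ≤ r)
    (h : ρ ^ 2 + z ^ 2 = r ^ 2)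
    (hU : ∀ y ∈ Ioo (-1 : ℝ) 1, |U y| ≤ A * (1 - y ^ 2) * (1 + |log (1 - y ^ 2)|))
    (hU' : ∀ y ∈ Ioo (-1 : ℝ) 1, |deriv U y| ≤ A * (1 + |log (1 - y ^ 2)|)) :
    |U (z / r)| ≤ A * (1 + 2 * log (r / ρ)) * (ρ / r) ^ 2 ∧
      |deriv U (z / r)| ≤ A * (1 + 2 * log (r / ρ)) := by
  have hr : 0 < r := hρ.trans_le hρr
  have hy := one_sub_div_sq_eq hr.ne' h
  have hmem : z / r ∈ Ioo (-1 : ℝ) 1 := by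
    have : (z / r) ^ 2 < 1 := by nlinarith [sq_pos_of_pos (div_pos hρ hr)]
    exact abs_lt.mp (sq_lt_one_iff_abs_lt_one _ |>.mp this)
  have hU := hU _ hmem
  have hU' := hU' _ hmem
  rw [hy, abs_log_div_sq hρ hρr] at hU hU'
  exact ⟨hU.trans_eq (by ring), hU'⟩

lemma primeNorm3_sq (x : EuclideanSpace ℝ (Fin 3)) : primeNorm3 x ^ 2 = x 0 ^ 2 + x 1 ^ 2 :=
  sq_sqrt (by positivity)

lemma primeNorm3_nonneg (x : EuclideanSpace ℝ (Fin 3)) : 0 ≤ primeNorm3 x :=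
  sqrt_nonneg _

lemma primeNorm3_sq_add_sq (x : EuclideanSpace ℝ (Fin 3)) :
    primeNorm3 x ^ 2 + x 2 ^ 2 = ‖x‖ ^ 2 := by
  rw [primeNorm3_sq, EuclideanSpace.norm_sq_eq, Fin.sum_univ_three]
  simp only [Real.norm_eq_abs, sq_abs]

lemma primeNorm3_pos {x : EuclideanSpace ℝ (Fin 3)} (hx : ¬(x 0 = 0 ∧ x 1 = 0)) :
    0 < primeNorm3 x := by
  rw [primeNorm3, sqrt_pos]
  rcases not_and_or.mp hx with h | h
  · nlinarith [sq_pos_of_ne_zero h, sq_nonneg (x 1)]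
  · nlinarith [sq_pos_of_ne_zero h, sq_nonneg (x 0)]

lemma primeNorm3_le_norm (x : EuclideanSpace ℝ (Fin 3)) : primeNorm3 x ≤ ‖x‖ := by
  refine le_of_pow_le_pow_left₀ two_ne_zero (norm_nonneg x) ?_
  rw [← primeNorm3_sq_add_sq x]
  nlinarith [sq_nonneg (x 2)]

/-- `ρ r e_θ`, where `e_θ` is the unit vector of the polar angle. -/
noncomputable def polarDir (x : EuclideanSpace ℝ (Fin 3)) : EuclideanSpace ℝ (Fin 3) :=
  !₂[x 0 * x 2, x 1 * x 2, -primeNorm3 x ^ 2]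

lemma norm_polarDir (x : EuclideanSpace ℝ (Fin 3)) : ‖polarDir x‖ = primeNorm3 x * ‖x‖ := by
  refine (pow_left_inj₀ (norm_nonneg _)
    (mul_nonneg (primeNorm3_nonneg x) (norm_nonneg x)) two_ne_zero).mp ?_
  rw [EuclideanSpace.norm_sq_eq, Fin.sum_univ_three, mul_pow, ← primeNorm3_sq_add_sq x]
  simp only [polarDir, Real.norm_eq_abs, sq_abs, Matrix.cons_val_zero, Matrix.cons_val_one,
    Matrix.cons_val, Even.neg_pow even_two, primeNorm3_sq]
  ring

lemma velField_eq (U : ℝ → ℝ) {x : EuclideanSpace ℝ (Fin 3)} (hρ : primeNorm3 x ≠ 0) :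
    velField U x = (deriv U (x 2 / ‖x‖) / ‖x‖ ^ 2) • x +
      (U (x 2 / ‖x‖) / (‖x‖ * primeNorm3 x ^ 2)) • polarDir x := by
  ext i
  fin_cases i <;> simp [velField, polarDir]
  · ring
  · ring
  · field_simp
    ring

lemma norm_velField_le (U : ℝ → ℝ) {x : EuclideanSpace ℝ (Fin 3)} (hρ : 0 < primeNorm3 x) :
    ‖velField U x‖ ≤ |deriv U (x 2 / ‖x‖)| / ‖x‖ + |U (x 2 / ‖x‖)| / primeNorm3 x := by
  have hr : 0 < ‖x‖ := hρ.trans_le (primeNorm3_le_norm x)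
  rw [velField_eq U hρ.ne']
  refine (norm_add_le _ _).trans_eq ?_
  simp only [norm_smul, norm_polarDir, norm_div, norm_mul, norm_pow, Real.norm_eq_abs,
    abs_norm, abs_of_pos hρ]
  field_simp

lemma abs_pressure_le (U : ℝ → ℝ) (x : EuclideanSpace ℝ (Fin 3)) :
    |pressure U x| ≤
      |deriv U (x 2 / ‖x‖)| / ‖x‖ ^ 2 + U (x 2 / ‖x‖) ^ 2 / (2 * primeNorm3 x ^ 2) := by
  refine (abs_sub _ _).trans_eq ?_
  rw [abs_div, abs_of_nonneg (by positivity : (0 : ℝ) ≤ ‖x‖ ^ 2),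
    abs_of_nonneg (by positivity : 0 ≤ U (x 2 / ‖x‖) ^ 2 / (2 * primeNorm3 x ^ 2))]

lemma norm_velField_le_of_bounds {U : ℝ → ℝ} {x : EuclideanSpace ℝ (Fin 3)} {B : ℝ}
    (hρ : 0 < primeNorm3 x) (hD : |deriv U (x 2 / ‖x‖)| ≤ B)
    (hU : |U (x 2 / ‖x‖)| ≤ B * (primeNorm3 x / ‖x‖) ^ 2) :
    ‖velField U x‖ ≤ 2 * B / ‖x‖ := by
  have hρr := primeNorm3_le_norm x
  have hr : 0 < ‖x‖ := hρ.trans_le hρr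
  have hB : 0 ≤ B := (abs_nonneg _).trans hD
  calc ‖velField U x‖ ≤ B / ‖x‖ + B * (primeNorm3 x / ‖x‖) ^ 2 / primeNorm3 x := by
        grw [norm_velField_le U hρ, hD, hU]
    _ = B / ‖x‖ + B * primeNorm3 x / ‖x‖ ^ 2 := by field_simp
    _ ≤ B / ‖x‖ + B * ‖x‖ / ‖x‖ ^ 2 := by gcongr
    _ = 2 * B / ‖x‖ := by field_simp; ring

lemma abs_pressure_le_of_bounds {U : ℝ → ℝ} {x : EuclideanSpace ℝ (Fin 3)} {B K : ℝ}
    (hρ : 0 < primeNorm3 x) (hD : |deriv U (x 2 / ‖x‖)| ≤ B)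
    (hU : |U (x 2 / ‖x‖)| ≤ B * (primeNorm3 x / ‖x‖) ^ 2)
    (hBK : B * primeNorm3 x ≤ K * ‖x‖) :
    |pressure U x| ≤ (B + K ^ 2 / 2) / ‖x‖ ^ 2 := by
  have hr : 0 < ‖x‖ := hρ.trans_le (primeNorm3_le_norm x)
  have hB : 0 ≤ B := (abs_nonneg _).trans hD
  have hU2 : U (x 2 / ‖x‖) ^ 2 ≤ (B * primeNorm3 x) ^ 2 * primeNorm3 x ^ 2 / ‖x‖ ^ 4 := by
    rw [← sq_abs]
    calc |U (x 2 / ‖x‖)| ^ 2 ≤ (B * (primeNorm3 x / ‖x‖) ^ 2) ^ 2 := by gcongr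
      _ = _ := by field_simp
  calc |pressure U x|
      ≤ B / ‖x‖ ^ 2 +
          (B * primeNorm3 x) ^ 2 * primeNorm3 x ^ 2 / ‖x‖ ^ 4 / (2 * primeNorm3 x ^ 2) := by
        grw [abs_pressure_le, hD, hU2]
    _ ≤ B / ‖x‖ ^ 2 +
          (K * ‖x‖) ^ 2 * primeNorm3 x ^ 2 / ‖x‖ ^ 4 / (2 * primeNorm3 x ^ 2) := by
        gcongr
    _ = (B + K ^ 2 / 2) / ‖x‖ ^ 2 := by field_simp

/-- Pointwise bounds on the velocity field and pressure associated with a profile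
satisfying the asymptotic bounds (Corollary 2.2, estimates (2.15)-(2.16) and (3.2)). -/
theorem stmt9 :
    ∃ C > 0, ∀ A : ℝ, 0 < A → ∀ U : ℝ → ℝ,
      ContinuousOn U (Icc (-1) 1) → ContDiffOn ℝ 1 U (Ioo (-1) 1) →
      (∀ y ∈ Ioo (-1 : ℝ) 1, |U y| ≤ A * (1 - y ^ 2) * (1 + |Real.log (1 - y ^ 2)|)) →
      (∀ y ∈ Ioo (-1 : ℝ) 1, |deriv U y| ≤ A * (1 + |Real.log (1 - y ^ 2)|)) →
      ∀ x : EuclideanSpace ℝ (Fin 3), ¬(x 0 = 0 ∧ x 1 = 0) →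
        ‖velField U x‖ ≤ C * A * (1 + Real.log (‖x‖ / primeNorm3 x)) / ‖x‖ ∧
        |pressure U x| ≤ C * (A + A ^ 2) * (1 + Real.log (‖x‖ / primeNorm3 x)) / ‖x‖ ^ 2 := by
  refine ⟨4, by norm_num, fun A hA U _ _ hU hU' x hx => ?_⟩
  have hρ := primeNorm3_pos hx
  have hρr := primeNorm3_le_norm x
  obtain ⟨hUy, hDy⟩ := profile_bounds_at hρ hρr (primeNorm3_sq_add_sq x) hU hU'
  set L := log (‖x‖ / primeNorm3 x)
  have hL : 0 ≤ L := log_nonneg ((one_le_div hρ).mpr hρr)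
  have hBK : A * (1 + 2 * L) * primeNorm3 x ≤ 2 * A * ‖x‖ := by
    calc A * (1 + 2 * L) * primeNorm3 x ≤ A * (2 * (‖x‖ / primeNorm3 x)) * primeNorm3 x := by
          grw [one_add_two_mul_log_le (div_pos (hρ.trans_le hρr) hρ)]
      _ = 2 * A * ‖x‖ := by field_simp
  constructor
  · calc ‖velField U x‖ ≤ 2 * (A * (1 + 2 * L)) / ‖x‖ := norm_velField_le_of_bounds hρ hDy hUy
      _ ≤ 4 * A * (1 + L) / ‖x‖ := by gcongr ?_ / _; nlinarith
  · calc |pressure U x| ≤ (A * (1 + 2 * L) + (2 * A) ^ 2 / 2) / ‖x‖ ^ 2 :=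
          abs_pressure_le_of_bounds hρ hDy hUy hBK
      _ ≤ 4 * (A + A ^ 2) * (1 + L) / ‖x‖ ^ 2 := by
          gcongr ?_ / _
          nlinarith [mul_nonneg hA.le hL]
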